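/- For A ∈ M_n(ℍ), Sdet(A) > 0 if and only if A is invertible. -/

import Mathlib

/-!
The map `c` is multiplicative and injective, so `A` is invertible exactly when `c(A)` is:
in the Artinian ring `M_n(ℍ)` an element is a unit as soon as it is right-regular, and
right-regularity pulls back along `c`. Positivity is proved by Gaussian elimination: after
permuting rows, a nonzero pivot `q` in the corner gives the Schur-complement factorisation
`det c(A) = det c(S) · ‖q‖²`, and induction on the size applies to `S`.
-/

open Matrix

/-- The complex "X" part of a quaternion `q = X + jY`. -/
def qPartX (q : Quaternion ℝ) : ℂ := ⟨q.re, q.imI⟩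

/-- The complex "Y" part of a quaternion `q = X + jY`. -/
def qPartY (q : Quaternion ℝ) : ℂ := ⟨q.imJ, -q.imK⟩

/-- The complex matrix `c(A) = [[X, -conj Y],[Y, conj X]]` associated to `A = X + jY`. -/
def cMat {m : Type} [Fintype m] [DecidableEq m] (A : Matrix m m (Quaternion ℝ)) :
    Matrix (m ⊕ m) (m ⊕ m) ℂ :=
  Matrix.fromBlocks (A.map qPartX) (A.map fun q => -(starRingEnd ℂ) (qPartY q))
    (A.map qPartY) (A.map fun q => (starRingEnd ℂ) (qPartX q))

/-- Study's determinant `Sdet A = (det c(A))^(1/2)`. -/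
noncomputable def Sdet {m : Type} [Fintype m] [DecidableEq m]
    (A : Matrix m m (Quaternion ℝ)) : ℝ :=
  Real.sqrt (cMat A).det.re

open scoped Quaternion

lemma qPartX_add (p q : ℍ[ℝ]) : qPartX (p + q) = qPartX p + qPartX q := by
  apply Complex.ext <;> simp [qPartX]

lemma qPartY_add (p q : ℍ[ℝ]) : qPartY (p + q) = qPartY p + qPartY q := by
  apply Complex.ext <;> simp [qPartY, add_comm]

lemma qPartX_sum {ι : Type*} (s : Finset ι) (f : ι → ℍ[ℝ]) :
    qPartX (∑ i ∈ s, f i) = ∑ i ∈ s, qPartX (f i) :=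
  map_sum (AddMonoidHom.mk' qPartX qPartX_add) f s

lemma qPartY_sum {ι : Type*} (s : Finset ι) (f : ι → ℍ[ℝ]) :
    qPartY (∑ i ∈ s, f i) = ∑ i ∈ s, qPartY (f i) :=
  map_sum (AddMonoidHom.mk' qPartY qPartY_add) f s

lemma qPartX_mul (p q : ℍ[ℝ]) :
    qPartX (p * q) = qPartX p * qPartX q - (starRingEnd ℂ) (qPartY p) * qPartY q := by
  apply Complex.ext <;> simp [qPartX, qPartY] <;> ring

lemma qPartY_mul (p q : ℍ[ℝ]) :
    qPartY (p * q) = qPartY p * qPartX q + (starRingEnd ℂ) (qPartX p) * qPartY q := by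
  apply Complex.ext <;> simp [qPartX, qPartY] <;> ring

@[simp] lemma qPartX_zero : qPartX 0 = 0 := by simp [qPartX, Complex.ext_iff]
@[simp] lemma qPartY_zero : qPartY 0 = 0 := by simp [qPartY, Complex.ext_iff]
@[simp] lemma qPartX_one : qPartX 1 = 1 := by simp [qPartX, Complex.ext_iff]
@[simp] lemma qPartY_one : qPartY 1 = 0 := by simp [qPartY, Complex.ext_iff]

lemma normSq_qPartX_add_normSq_qPartY (q : ℍ[ℝ]) :
    Complex.normSq (qPartX q) + Complex.normSq (qPartY q) = Quaternion.normSq q := by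
  simp [qPartX, qPartY, Complex.normSq_apply, Quaternion.normSq_def']
  ring

variable {m k : Type} [Fintype m] [DecidableEq m] [Fintype k] [DecidableEq k]

lemma cMat_one : cMat (1 : Matrix m m ℍ[ℝ]) = 1 := by
  ext (i | i) (j | j) <;> by_cases h : i = j <;> simp [cMat, one_apply, h]

lemma cMat_mul (A B : Matrix m m ℍ[ℝ]) : cMat (A * B) = cMat A * cMat B := by
  ext (i | i) (j | j) <;>
  · simp only [cMat, fromBlocks_apply₁₁, fromBlocks_apply₁₂, fromBlocks_apply₂₁,
      fromBlocks_apply₂₂, map_apply, mul_apply, Fintype.sum_sum_type, qPartX_sum, qPartY_sum,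
      map_sum, ← Finset.sum_neg_distrib, ← Finset.sum_add_distrib]
    refine Fintype.sum_congr _ _ fun l => ?_
    simp only [qPartX_mul, qPartY_mul, map_sub, map_add, map_mul, Complex.conj_conj] <;> ring

def cMatHom : Matrix m m ℍ[ℝ] →* Matrix (m ⊕ m) (m ⊕ m) ℂ where
  toFun := cMat
  map_one' := cMat_one
  map_mul' := cMat_mul

lemma cMat_injective : Function.Injective (cMat (m := m)) := by
  intro A B h
  ext i j
  · exact congrArg Complex.re (congrFun₂ h (.inl i) (.inl j))
  · exact congrArg Complex.im (congrFun₂ h (.inl i) (.inl j))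
  · exact congrArg Complex.re (congrFun₂ h (.inr i) (.inl j))
  · exact neg_injective (congrArg Complex.im (congrFun₂ h (.inr i) (.inl j)))

lemma isUnit_cMat_iff {A : Matrix m m ℍ[ℝ]} : IsUnit (cMat A) ↔ IsUnit A := by
  refine ⟨fun h => IsArtinianRing.isUnit_iff_isRightRegular.mpr fun X Y hXY => ?_,
    fun h => h.map cMatHom⟩
  refine cMat_injective (h.mul_left_injective ?_)
  simpa only [cMat_mul] using congrArg cMat hXY

lemma isUnit_iff_det_cMat_ne_zero {A : Matrix m m ℍ[ℝ]} : IsUnit A ↔ (cMat A).det ≠ 0 := by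
  rw [← isUnit_cMat_iff, isUnit_iff_isUnit_det, isUnit_iff_ne_zero]

def cMatRect {a b : Type} (M : Matrix a b ℍ[ℝ]) : Matrix (a ⊕ a) (b ⊕ b) ℂ :=
  fromBlocks (M.map qPartX) (M.map fun q => -(starRingEnd ℂ) (qPartY q))
    (M.map qPartY) (M.map fun q => (starRingEnd ℂ) (qPartX q))

@[simp] lemma cMatRect_zero {a b : Type} : cMatRect (0 : Matrix a b ℍ[ℝ]) = 0 := by
  ext (i | i) (j | j) <;> simp [cMatRect]

lemma cMat_fromBlocks (A : Matrix m m ℍ[ℝ]) (B : Matrix m k ℍ[ℝ]) (C : Matrix k m ℍ[ℝ])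
    (D : Matrix k k ℍ[ℝ]) :
    cMat (fromBlocks A B C D) =
      (fromBlocks (cMat A) (cMatRect B) (cMatRect C) (cMat D)).submatrix
        (Equiv.sumSumSumComm m k m k) (Equiv.sumSumSumComm m k m k) := by
  ext ((i | i) | (i | i)) ((j | j) | (j | j)) <;> rfl

lemma det_cMat_fromBlocks_zero₂₁ (A : Matrix m m ℍ[ℝ]) (B : Matrix m k ℍ[ℝ])
    (D : Matrix k k ℍ[ℝ]) :
    (cMat (fromBlocks A B 0 D)).det = (cMat A).det * (cMat D).det := by
  rw [cMat_fromBlocks, det_submatrix_equiv_self, cMatRect_zero, det_fromBlocks_zero₂₁]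

lemma det_cMat_fromBlocks_zero₁₂ (A : Matrix m m ℍ[ℝ]) (C : Matrix k m ℍ[ℝ])
    (D : Matrix k k ℍ[ℝ]) :
    (cMat (fromBlocks A 0 C D)).det = (cMat A).det * (cMat D).det := by
  rw [cMat_fromBlocks, det_submatrix_equiv_self, cMatRect_zero, det_fromBlocks_zero₁₂]

lemma cMat_submatrix (A : Matrix m m ℍ[ℝ]) (e f : k → m) :
    cMat (A.submatrix e f) = (cMat A).submatrix (Sum.map e e) (Sum.map f f) := by
  ext (i | i) (j | j) <;> rfl

lemma det_cMat_submatrix (A : Matrix m m ℍ[ℝ]) (e f : k ≃ m) :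
    (cMat (A.submatrix e f)).det = (cMat A).det := by
  have hσ : A.submatrix e f = (A.submatrix (f.symm.trans e) id).submatrix f f := by
    ext i j : 1; simp
  rw [hσ, cMat_submatrix, cMat_submatrix, Sum.map_id_id]
  change (((cMat A).submatrix (Equiv.sumCongr (f.symm.trans e) (f.symm.trans e)) id).submatrix
    (Equiv.sumCongr f f) (Equiv.sumCongr f f)).det = _
  rw [det_submatrix_equiv_self, det_permute, Equiv.Perm.sign_sumCongr, Int.units_mul_self,
    Units.val_one, Int.cast_one, one_mul]

lemma det_cMat_eq_zero_of_column_eq_zero {A : Matrix m m ℍ[ℝ]} (j : m) (h : ∀ i, A i j = 0) :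
    (cMat A).det = 0 :=
  det_eq_zero_of_column_eq_zero (.inl j) fun
    | .inl i => by simp [cMat, h]
    | .inr i => by simp [cMat, h]

lemma det_cMat_of_unique {u : Type} [Unique u] [DecidableEq u] (D : Matrix u u ℍ[ℝ]) :
    (cMat D).det = Quaternion.normSq (D default default) := by
  let e : Fin 2 ≃ u ⊕ u :=
    (finSumFinEquiv (m := 1) (n := 1)).symm.trans
      (Equiv.sumCongr (Equiv.ofUnique _ _) (Equiv.ofUnique _ _))
  rw [← det_submatrix_equiv_self e, det_fin_two, ← normSq_qPartX_add_normSq_qPartY]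
  have e0 : e 0 = .inl default := rfl
  have e1 : e 1 = .inr default := rfl
  simp only [submatrix_apply, e0, e1, cMat, fromBlocks_apply₁₁, fromBlocks_apply₁₂,
    fromBlocks_apply₂₁, fromBlocks_apply₂₂, map_apply]
  apply Complex.ext
  · simp [Complex.normSq_apply]
  · simp
    ring

lemma Matrix.fromBlocks_eq_mul_of_mul_eq_one {l n α : Type*} [Fintype l] [Fintype n]
    [DecidableEq l] [DecidableEq n] [Ring α] (A : Matrix l l α) (B : Matrix l n α)
    (C : Matrix n l α) {D D' : Matrix n n α} (hD : D * D' = 1) :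
    fromBlocks A B C D = fromBlocks (A - B * D' * C) B 0 D * fromBlocks 1 0 (D' * C) 1 := by
  rw [fromBlocks_multiply]
  simp [Matrix.mul_assoc, ← Matrix.mul_assoc D, hD]

lemma det_cMat_fromBlocks_of_mul_eq_one (A : Matrix m m ℍ[ℝ]) (B : Matrix m k ℍ[ℝ])
    (C : Matrix k m ℍ[ℝ]) {D D' : Matrix k k ℍ[ℝ]} (hD : D * D' = 1) :
    (cMat (fromBlocks A B C D)).det = (cMat (A - B * D' * C)).det * (cMat D).det := by
  rw [fromBlocks_eq_mul_of_mul_eq_one A B C hD, cMat_mul, det_mul, det_cMat_fromBlocks_zero₂₁,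
    det_cMat_fromBlocks_zero₁₂, cMat_one, cMat_one, det_one, det_one, mul_one, mul_one]

lemma re_det_cMat_pos_option
    (ih : ∀ A : Matrix m m ℍ[ℝ], (cMat A).det ≠ 0 → 0 < (cMat A).det.re)
    (A : Matrix (Option m) (Option m) ℍ[ℝ]) (hA : (cMat A).det ≠ 0) : 0 < (cMat A).det.re := by
  obtain ⟨i, hi⟩ : ∃ i, A i none ≠ 0 := by
    by_contra! h
    exact hA (det_cMat_eq_zero_of_column_eq_zero none h)
  let f := (Equiv.optionEquivSumPUnit m).symm
  let B := A.submatrix (f.trans (Equiv.swap none i)) f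
  let q := B (.inr .unit) (.inr .unit)
  have hq : q ≠ 0 := by simpa [q, B, f] using hi
  have hD : B.toBlocks₂₂ * of (fun _ _ => q⁻¹) = 1 := by
    ext ⟨⟩ ⟨⟩ : 1
    simp [mul_apply, toBlocks₂₂, q, hq]
  have hB := det_cMat_fromBlocks_of_mul_eq_one B.toBlocks₁₁ B.toBlocks₁₂ B.toBlocks₂₁ hD
  rw [fromBlocks_toBlocks, det_cMat_submatrix, det_cMat_of_unique] at hB
  rw [show B.toBlocks₂₂ default default = q from rfl] at hB
  rw [hB] at hA ⊢
  rw [Complex.re_mul_ofReal]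
  exact mul_pos (ih _ (left_ne_zero_of_mul hA))
    (Quaternion.normSq_nonneg.lt_of_ne' (Quaternion.normSq_ne_zero.2 hq))

lemma re_det_cMat_pos (A : Matrix m m ℍ[ℝ]) (hA : (cMat A).det ≠ 0) : 0 < (cMat A).det.re := by
  revert A
  refine Finite.induction_empty_option (P := fun m => ∀ [Fintype m] [DecidableEq m]
    (A : Matrix m m ℍ[ℝ]), (cMat A).det ≠ 0 → 0 < (cMat A).det.re) ?_ ?_ ?_ m
  · intro α β e ih _ _ A
    have := Fintype.ofEquiv β e.symm
    classical
    simpa only [det_cMat_submatrix A e e] using ih (A.submatrix e e)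
  · intro _ _ A _
    simp [det_isEmpty]
  · intro α _ ih instF instD
    classical
    obtain rfl := Subsingleton.elim instF instFintypeOption
    obtain rfl := Subsingleton.elim instD (fun a b => Option.instDecidableEq a b)
    exact re_det_cMat_pos_option ih

theorem stmt_10 {n : ℕ} (A : Matrix (Fin n) (Fin n) (Quaternion ℝ)) :
    0 < Sdet A ↔ IsUnit A := by
  rw [Sdet, Real.sqrt_pos, isUnit_iff_det_cMat_ne_zero]
  refine ⟨fun h hA => ?_, re_det_cMat_pos A⟩
  simp [hA] at h
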